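/- arXiv:2409.05445 — 4 statements merged into one kernel-verified Lean document; each statement's English description precedes it below -/
import Mathlib

section
/- Let G : ℝ^n → ℝ^n be differentiable at x₁ ∈ ℝ^n, let Δt ∈ ℝ, and let N : ℝ^n → ℝ^n be differentiable at x₀ ∈ ℝ^n with N(x₀) = x₁. Suppose that for all y in some neighborhood of x₀ the residual identity N(y) - y - Δt · G(N(y)) = 0 holds, and suppose the continuous linear map A = id - Δt • (fderiv G x₁) is invertible, i.e. there is a continuous linear equivalence e : ℝ^n ≃L[ℝ] ℝ^n whose underlying continuous linear map equals A. Then the derivative of the implicit Euler step N at x₀ equals the inverse of A: fderiv N x₀ = e.symm (as continuous linear maps), i.e. dx₁/dx₀ = (I - Δt · G'(x₁))⁻¹ = (dF/dx₁)⁻¹. -/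
/-- Implicit differentiation of one implicit Euler step, invertible case: if `N`
satisfies the residual identity `N y - y - Δt • G (N y) = 0` near `x₀`, `N` is
differentiable at `x₀` with `N x₀ = x₁`, `G` is differentiable at `x₁`, and the
continuous linear map `A = id - Δt • G'(x₁)` is invertible, being the underlying
map of a continuous linear equivalence `e`, then `N'(x₀) = e.symm = A⁻¹`,
i.e. `dx₁/dx₀ = (I - Δt · G'(x₁))⁻¹ = (dF/dx₁)⁻¹`. -/
theorem implicit_euler_step_fderiv_eq_inverse (n : ℕ)
    (G N : EuclideanSpace ℝ (Fin n) → EuclideanSpace ℝ (Fin n))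
    (x₀ x₁ : EuclideanSpace ℝ (Fin n)) (Δt : ℝ)
    (hG : DifferentiableAt ℝ G x₁)
    (hN : DifferentiableAt ℝ N x₀)
    (hNx : N x₀ = x₁)
    (hres : ∀ᶠ y in nhds x₀, N y - y - Δt • G (N y) = 0)
    (e : EuclideanSpace ℝ (Fin n) ≃L[ℝ] EuclideanSpace ℝ (Fin n))
    (he : (e : EuclideanSpace ℝ (Fin n) →L[ℝ] EuclideanSpace ℝ (Fin n)) =
      ContinuousLinearMap.id ℝ (EuclideanSpace ℝ (Fin n)) - Δt • fderiv ℝ G x₁) :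
    fderiv ℝ N x₀ =
      (e.symm : EuclideanSpace ℝ (Fin n) →L[ℝ] EuclideanSpace ℝ (Fin n)) := by
  set D := fderiv ℝ N x₀ with hD
  have hDN : HasFDerivAt N D x₀ := hN.hasFDerivAt
  have hGN : HasFDerivAt (fun y => G (N y)) ((fderiv ℝ G x₁).comp D) x₀ := by
    have : HasFDerivAt G (fderiv ℝ G x₁) (N x₀) := by rw [hNx]; exact hG.hasFDerivAt
    exact this.comp x₀ hDN
  have hGN' : HasFDerivAt (fun y => Δt • G (N y)) (Δt • ((fderiv ℝ G x₁).comp D)) x₀ :=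
    HasFDerivAt.const_smul (𝕜 := ℝ) (E := EuclideanSpace ℝ (Fin n)) (F := EuclideanSpace ℝ (Fin n)) hGN Δt
  have hF : HasFDerivAt (fun y => N y - y - Δt • G (N y))
      (D - ContinuousLinearMap.id ℝ (EuclideanSpace ℝ (Fin n))
        - Δt • ((fderiv ℝ G x₁).comp D)) x₀ :=
    ((hDN.sub (hasFDerivAt_id x₀)).sub hGN')
  have hF0 : HasFDerivAt (fun y => N y - y - Δt • G (N y)) (0 : EuclideanSpace ℝ (Fin n) →L[ℝ] EuclideanSpace ℝ (Fin n)) x₀ := by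
    have hz : HasFDerivAt (fun _ : EuclideanSpace ℝ (Fin n) =>
        (0 : EuclideanSpace ℝ (Fin n))) (0 : EuclideanSpace ℝ (Fin n) →L[ℝ] EuclideanSpace ℝ (Fin n)) x₀ := by simpa using hasFDerivAt_const (0 : EuclideanSpace ℝ (Fin n)) x₀
    exact hz.congr_of_eventuallyEq hres
  have heq := hF.unique hF0
  have key : (e : EuclideanSpace ℝ (Fin n) →L[ℝ] EuclideanSpace ℝ (Fin n)).comp D =
      ContinuousLinearMap.id ℝ (EuclideanSpace ℝ (Fin n)) := by
    rw [he]
    refine ContinuousLinearMap.ext fun v => ?_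
    have h2 := congrArg (fun L => L v) heq
    simp only [ContinuousLinearMap.sub_apply, ContinuousLinearMap.id_apply,
      ContinuousLinearMap.zero_apply, ContinuousLinearMap.smul_apply,
      ContinuousLinearMap.comp_apply] at h2 ⊢
    rw [sub_sub, sub_eq_zero] at h2
    rw [sub_eq_iff_eq_add]
    exact h2
  have : ∀ v, D v = e.symm v := by
    intro v
    have h1 : e (D v) = v := by
      have := congrArg (fun L => L v) key
      simpa using this
    calc D v = e.symm (e (D v)) := (e.symm_apply_apply _).symm
      _ = e.symm v := by rw [h1]
  exact ContinuousLinearMap.ext this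
end

section
/- (Lemma 2) Let n, m be positive natural numbers, Δt ∈ ℝ, and for each i = 1, ..., m let G_i : ℝ^n → ℝ^n (the right-hand side G(i·Δt, ·) at time step i) and N_i : ℝ^n → ℝ^n (the i-th implicit Euler step). Let x₀, x₁, ..., x_m ∈ ℝ^n satisfy N_i(x_{i-1}) = x_i, suppose G_i is differentiable at x_i and N_i is differentiable at x_{i-1}, that for all y in some neighborhood of x_{i-1} the residual identity N_i(y) - y - Δt · G_i(N_i(y)) = 0 holds, and that the continuous linear map A_i = id - Δt • (fderiv G_i x_i) is invertible with inverse given by a continuous linear equivalence e_i. Then the composite implicit Euler map E = N_m ∘ N_{m-1} ∘ ... ∘ N_1 is differentiable at x₀ and its derivative is the product of the inverses of the step residual Jacobians: fderiv E x₀ = e_m.symm ∘ e_{m-1}.symm ∘ ... ∘ e_1.symm. -/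
private lemma foldl_hasFDerivAt {E : Type*} [NormedAddCommGroup E] [NormedSpace ℝ E] :
    ∀ (m : ℕ) (N : Fin m → E → E) (d : Fin m → (E →L[ℝ] E)) (x : Fin (m + 1) → E),
    (∀ i, HasFDerivAt (N i) (d i) (x i.castSucc)) →
    (∀ i, N i (x i.castSucc) = x i.succ) →
    HasFDerivAt (fun y => (List.ofFn N).foldl (fun z f => f z) y)
      ((List.ofFn d).reverse.prod) (x 0) := by
  intro m
  induction m with
  | zero =>
    intro N d x _ _
    simp only [List.ofFn_zero, List.foldl_nil, List.reverse_nil, List.prod_nil]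
    rw [ContinuousLinearMap.one_def]
    exact hasFDerivAt_id (x 0)
  | succ m ih =>
    intro N d x hd hs
    have h0 : ((0 : Fin (m + 1)).castSucc) = (0 : Fin (m + 2)) := rfl
    have IH := ih (fun i => N i.succ) (fun i => d i.succ) (fun j => x j.succ)
      (fun i => by
        have := hd i.succ
        rwa [← Fin.succ_castSucc] at this)
      (fun i => by
        have := hs i.succ
        rwa [← Fin.succ_castSucc] at this)
    have hfun : (fun y => (List.ofFn N).foldl (fun z f => f z) y) =
        (fun y => (List.ofFn (fun i : Fin m => N i.succ)).foldl (fun z f => f z) y) ∘ (N 0) := by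
      funext y
      simp [List.ofFn_succ]
    have hx : N 0 (x 0) = x ((0 : Fin (m+1)).succ) := by
      have := hs 0; rwa [h0] at this
    rw [hfun]
    have hcomp' : HasFDerivAt
        ((fun y => (List.ofFn fun i : Fin m => N i.succ).foldl (fun z f => f z) y) ∘ N 0)
        (((List.ofFn fun i : Fin m => d i.succ).reverse.prod).comp (d 0)) (x 0) := by
      apply HasFDerivAt.comp
      · rw [hx]; exact IH
      · exact h0 ▸ hd 0
    convert hcomp' using 1
    rw [List.ofFn_succ, List.reverse_cons, List.prod_append, List.prod_singleton,
      ContinuousLinearMap.mul_def]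

/-- Lemma 2: the composite implicit Euler map `E = N_m ∘ ⋯ ∘ N_1` (0-indexed:
`E y = N_{m-1} (⋯ (N_0 y))`, expressed as a left fold) is differentiable at
`x₀ = x 0` and its derivative is the product of the inverses of the step
residual Jacobians, `fderiv E x₀ = e_m.symm ∘ ⋯ ∘ e_1.symm` (0-indexed:
`(e (m-1)).symm ∘ ⋯ ∘ (e 0).symm`, the reversed-list product in the monoid of
continuous linear maps under composition).  Here `N_i (x_{i-1}) = x_i`, each
`N_i` satisfies the implicit Euler residual identity near `x_{i-1}`, and
`e_i` is a continuous linear equivalence whose underlying continuous linear map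
is `A_i = id - Δt • (fderiv G_i x_i)`. -/
theorem implicit_euler_fderiv_eq_prod_inverses (n m : ℕ) (hn : 0 < n) (hm : 0 < m)
    (Δt : ℝ)
    (G N : Fin m → (EuclideanSpace ℝ (Fin n) → EuclideanSpace ℝ (Fin n)))
    (x : Fin (m + 1) → EuclideanSpace ℝ (Fin n))
    (e : Fin m → (EuclideanSpace ℝ (Fin n) ≃L[ℝ] EuclideanSpace ℝ (Fin n)))
    (hstep : ∀ i : Fin m, N i (x i.castSucc) = x i.succ)
    (hG : ∀ i : Fin m, DifferentiableAt ℝ (G i) (x i.succ))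
    (hN : ∀ i : Fin m, DifferentiableAt ℝ (N i) (x i.castSucc))
    (hres : ∀ i : Fin m, ∀ᶠ y in nhds (x i.castSucc),
      N i y - y - Δt • G i (N i y) = 0)
    (he : ∀ i : Fin m,
      (e i : EuclideanSpace ℝ (Fin n) →L[ℝ] EuclideanSpace ℝ (Fin n)) =
        ContinuousLinearMap.id ℝ (EuclideanSpace ℝ (Fin n)) -
          Δt • fderiv ℝ (G i) (x i.succ)) :
    DifferentiableAt ℝ (fun y => (List.ofFn N).foldl (fun z f => f z) y) (x 0) ∧
      fderiv ℝ (fun y => (List.ofFn N).foldl (fun z f => f z) y) (x 0) =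
        ((List.ofFn (fun i =>
          ((e i).symm : EuclideanSpace ℝ (Fin n) →L[ℝ] EuclideanSpace ℝ (Fin n)))).reverse).prod := by
  have key : ∀ i : Fin m, HasFDerivAt (N i)
      (((e i).symm : EuclideanSpace ℝ (Fin n) →L[ℝ] EuclideanSpace ℝ (Fin n)))
      (x i.castSucc) := by
    intro i
    have hNd : HasFDerivAt (N i) (fderiv ℝ (N i) (x i.castSucc)) (x i.castSucc) :=
      (hN i).hasFDerivAt
    set D := fderiv ℝ (N i) (x i.castSucc) with hDdef
    set G' := fderiv ℝ (G i) (x i.succ) with hG'def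
    have hGN : HasFDerivAt (fun y => G i (N i y)) (G'.comp D) (x i.castSucc) := by
      have hG'd : HasFDerivAt (G i) G' (N i (x i.castSucc)) := by
        rw [hstep i]; exact (hG i).hasFDerivAt
      exact hG'd.comp _ hNd
    have heq : (N i) =ᶠ[nhds (x i.castSucc)] fun y => y + Δt • G i (N i y) :=
      (hres i).mono (fun y hy => sub_eq_zero.mp (by rwa [sub_sub] at hy))
    have hR : HasFDerivAt (fun y => y + Δt • G i (N i y))
        (ContinuousLinearMap.id ℝ (EuclideanSpace ℝ (Fin n)) + Δt • (G'.comp D))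
        (x i.castSucc) :=
      (hasFDerivAt_id _).add (hGN.const_smul Δt)
    have hNd' : HasFDerivAt (N i)
        (ContinuousLinearMap.id ℝ (EuclideanSpace ℝ (Fin n)) + Δt • (G'.comp D))
        (x i.castSucc) := hR.congr_of_eventuallyEq heq
    have hD : D = ContinuousLinearMap.id ℝ (EuclideanSpace ℝ (Fin n)) + Δt • (G'.comp D) := by
      rw [hDdef]; exact hNd'.fderiv
    have hcomp : ((e i : EuclideanSpace ℝ (Fin n) →L[ℝ] EuclideanSpace ℝ (Fin n))).comp D =
        ContinuousLinearMap.id ℝ (EuclideanSpace ℝ (Fin n)) := by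
      rw [he i, ContinuousLinearMap.sub_comp, ContinuousLinearMap.id_comp,
        ContinuousLinearMap.smul_comp, ← hG'def]
      nth_rewrite 1 [hD]
      abel
    have hDe : D = ((e i).symm : EuclideanSpace ℝ (Fin n) →L[ℝ] EuclideanSpace ℝ (Fin n)) := by
      refine ContinuousLinearMap.ext fun y => ?_
      have := congrArg (fun L : EuclideanSpace ℝ (Fin n) →L[ℝ] EuclideanSpace ℝ (Fin n) =>
        (e i).symm (L y)) hcomp
      simpa using this
    exact hDe ▸ hNd
  have main := foldl_hasFDerivAt m N
    (fun i => ((e i).symm : EuclideanSpace ℝ (Fin n) →L[ℝ] EuclideanSpace ℝ (Fin n)))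
    x key hstep
  exact ⟨main.differentiableAt, main.fderiv⟩
end

section
/- (Theorem, operator form) Let n, m be positive natural numbers, Δt ∈ ℝ, and for each i = 1, ..., m let G_i : ℝ^n → ℝ^n (the right-hand side G(i·Δt, ·) at time step i) and N_i : ℝ^n → ℝ^n (the i-th implicit Euler step). Let x₀, x₁, ..., x_m ∈ ℝ^n satisfy N_i(x_{i-1}) = x_i, suppose G_i is differentiable at x_i and N_i is differentiable at x_{i-1}, that for all y in some neighborhood of x_{i-1} the residual identity N_i(y) - y - Δt · G_i(N_i(y)) = 0 holds, and that the continuous linear map A_i = id - Δt • (fderiv G_i x_i) is invertible with inverse given by a continuous linear equivalence e_i. Then the derivative E' = fderiv (N_m ∘ ... ∘ N_1) x₀ of the composite implicit Euler map at x₀ is invertible, and its inverse is the product of the residual Jacobians in forward order: (A_1 ∘ A_2 ∘ ... ∘ A_m) ∘ E' = id and E' ∘ (A_1 ∘ A_2 ∘ ... ∘ A_m) = id. -/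
/-!
Differentiating the residual identity `N y - y - Δt • G (N y) = 0` of one implicit Euler step
gives `(id - Δt • G') ∘ N' = id`, so the derivative of the step is the inverse of its residual
Jacobian `A`. By the chain rule the derivative of the composite map is
`A_m⁻¹ ∘ ⋯ ∘ A_1⁻¹ = (A_1 ∘ ⋯ ∘ A_m)⁻¹`.
-/

open Filter Topology

namespace ContinuousLinearEquiv

variable {R M : Type*} [Semiring R] [AddCommMonoid M] [Module R M] [TopologicalSpace M]

theorem coe_list_prod (l : List (M ≃L[R] M)) :
    ((l.prod : M ≃L[R] M) : M →L[R] M) = (l.map (↑)).prod := by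
  induction l with
  | nil => rfl
  | cons f l ih => simp only [List.prod_cons, toContinuousLinearMap_mul, ih, List.map_cons]

theorem coe_symm_list_prod (l : List (M ≃L[R] M)) :
    ((l.prod.symm : M ≃L[R] M) : M →L[R] M) =
      (l.map fun f => (f.symm : M →L[R] M)).reverse.prod := by
  change ((l.prod⁻¹ : M ≃L[R] M) : M →L[R] M) = _
  rw [List.prod_inv_reverse, coe_list_prod, List.map_reverse, List.map_map]
  rfl

end ContinuousLinearEquiv

section Derivatives

variable {𝕜 E : Type*} [NontriviallyNormedField 𝕜] [NormedAddCommGroup E] [NormedSpace 𝕜 E]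

theorem hasFDerivAt_symm_of_residual_eq_zero {G N : E → E} {G' : E →L[𝕜] E} {y : E}
    (c : 𝕜) (e : E ≃L[𝕜] E) (hG : HasFDerivAt G G' (N y)) (hN : DifferentiableAt 𝕜 N y)
    (hres : ∀ᶠ z in 𝓝 y, N z - z - c • G (N z) = 0)
    (he : (e : E →L[𝕜] E) = ContinuousLinearMap.id 𝕜 E - c • G') :
    HasFDerivAt N (e.symm : E →L[𝕜] E) y := by
  set N' := fderiv 𝕜 N y
  have hres' : N' - ContinuousLinearMap.id 𝕜 E - c • G'.comp N' = 0 :=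
    ((hN.hasFDerivAt.sub (hasFDerivAt_id y)).sub
      ((hG.comp y hN.hasFDerivAt).const_smul c)).unique
        ((hasFDerivAt_const 0 y).congr_of_eventuallyEq hres)
  have hinv : (e : E →L[𝕜] E).comp N' = ContinuousLinearMap.id 𝕜 E := by
    rw [he, ContinuousLinearMap.sub_comp, ContinuousLinearMap.id_comp,
      ContinuousLinearMap.smul_comp, ← sub_eq_zero, ← hres', sub_right_comm]
  have hN' : N' = e.symm :=
    ((ContinuousLinearEquiv.eq_toContinuousLinearMap_symm_comp N' _).2 hinv).trans
      (ContinuousLinearMap.comp_id _)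
  exact hN' ▸ hN.hasFDerivAt

theorem hasFDerivAt_list_foldl_ofFn {m : ℕ} (f : Fin m → E → E) (D : Fin m → E →L[𝕜] E)
    (x : Fin (m + 1) → E) (hstep : ∀ i, f i (x i.castSucc) = x i.succ)
    (hf : ∀ i, HasFDerivAt (f i) (D i) (x i.castSucc)) :
    HasFDerivAt (fun y => (List.ofFn f).foldl (fun z g => g z) y) (List.ofFn D).reverse.prod
      (x 0) := by
  induction m with
  | zero => exact hasFDerivAt_id (x 0)
  | succ m ih =>
    have htail := ih (fun i => f i.succ) (fun i => D i.succ) (fun j => x j.succ)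
      (fun i => hstep i.succ) (fun i => hf i.succ)
    rw [← hstep 0] at htail
    simp only [List.ofFn_succ, List.foldl_cons, List.reverse_cons, List.prod_append,
      List.prod_singleton]
    exact htail.comp (x 0) (hf 0)

end Derivatives

theorem implicit_euler_fderiv_inverse_general (n m : ℕ)
    (Δt : ℝ)
    (G N : Fin m → (EuclideanSpace ℝ (Fin n) → EuclideanSpace ℝ (Fin n)))
    (x : Fin (m + 1) → EuclideanSpace ℝ (Fin n))
    (e : Fin m → (EuclideanSpace ℝ (Fin n) ≃L[ℝ] EuclideanSpace ℝ (Fin n)))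
    (hstep : ∀ i : Fin m, N i (x i.castSucc) = x i.succ)
    (hG : ∀ i : Fin m, DifferentiableAt ℝ (G i) (x i.succ))
    (hN : ∀ i : Fin m, DifferentiableAt ℝ (N i) (x i.castSucc))
    (hres : ∀ i : Fin m, ∀ᶠ y in nhds (x i.castSucc),
      N i y - y - Δt • G i (N i y) = 0)
    (he : ∀ i : Fin m,
      (e i : EuclideanSpace ℝ (Fin n) →L[ℝ] EuclideanSpace ℝ (Fin n)) =
        ContinuousLinearMap.id ℝ (EuclideanSpace ℝ (Fin n)) -
          Δt • fderiv ℝ (G i) (x i.succ)) :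
    (List.ofFn (fun i =>
        ContinuousLinearMap.id ℝ (EuclideanSpace ℝ (Fin n)) -
          Δt • fderiv ℝ (G i) (x i.succ))).prod.comp
        (fderiv ℝ (fun y => (List.ofFn N).foldl (fun z f => f z) y) (x 0)) =
      ContinuousLinearMap.id ℝ (EuclideanSpace ℝ (Fin n)) ∧
    (fderiv ℝ (fun y => (List.ofFn N).foldl (fun z f => f z) y) (x 0)).comp
        (List.ofFn (fun i =>
          ContinuousLinearMap.id ℝ (EuclideanSpace ℝ (Fin n)) -
            Δt • fderiv ℝ (G i) (x i.succ))).prod =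
      ContinuousLinearMap.id ℝ (EuclideanSpace ℝ (Fin n)) := by
  have hstepDeriv : ∀ i, HasFDerivAt (N i) ((e i).symm : _ →L[ℝ] _) (x i.castSucc) := fun i => by
    have hGi : HasFDerivAt (G i) (fderiv ℝ (G i) (x i.succ)) (N i (x i.castSucc)) := by
      rw [hstep i]; exact (hG i).hasFDerivAt
    exact hasFDerivAt_symm_of_residual_eq_zero Δt (e i) hGi (hN i) (hres i) (he i)
  have hderiv : fderiv ℝ (fun y => (List.ofFn N).foldl (fun z f => f z) y) (x 0) =
      ((List.ofFn e).prod.symm : _ →L[ℝ] _) := by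
    rw [(hasFDerivAt_list_foldl_ofFn N _ x hstep hstepDeriv).fderiv,
      ContinuousLinearEquiv.coe_symm_list_prod, List.map_ofFn]
    rfl
  have hjac : (List.ofFn fun i => ContinuousLinearMap.id ℝ (EuclideanSpace ℝ (Fin n)) -
      Δt • fderiv ℝ (G i) (x i.succ)).prod = ((List.ofFn e).prod : _ →L[ℝ] _) := by
    simp only [← he, ContinuousLinearEquiv.coe_list_prod, List.map_ofFn]
    rfl
  rw [hderiv, hjac]
  exact ⟨(List.ofFn e).prod.coe_comp_coe_symm, (List.ofFn e).prod.coe_symm_comp_coe⟩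

/-- Theorem (operator form): under the hypotheses of Lemma 2, the derivative
`E' = fderiv (N_m ∘ ⋯ ∘ N_1) x₀` of the composite implicit Euler map at
`x₀ = x 0` is invertible, and its inverse is the product of the residual
Jacobians `A_i = id - Δt • (fderiv G_i x_i)` in forward order:
`(A_1 ∘ A_2 ∘ ⋯ ∘ A_m) ∘ E' = id` and `E' ∘ (A_1 ∘ A_2 ∘ ⋯ ∘ A_m) = id`
(0-indexed: `A_1 ∘ ⋯ ∘ A_m` is `(List.ofFn A).prod = A 0 * A 1 * ⋯ * A (m-1)`
in the monoid of continuous linear maps under composition). -/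
theorem implicit_euler_fderiv_inverse (n m : ℕ) (hn : 0 < n) (hm : 0 < m)
    (Δt : ℝ)
    (G N : Fin m → (EuclideanSpace ℝ (Fin n) → EuclideanSpace ℝ (Fin n)))
    (x : Fin (m + 1) → EuclideanSpace ℝ (Fin n))
    (e : Fin m → (EuclideanSpace ℝ (Fin n) ≃L[ℝ] EuclideanSpace ℝ (Fin n)))
    (hstep : ∀ i : Fin m, N i (x i.castSucc) = x i.succ)
    (hG : ∀ i : Fin m, DifferentiableAt ℝ (G i) (x i.succ))
    (hN : ∀ i : Fin m, DifferentiableAt ℝ (N i) (x i.castSucc))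
    (hres : ∀ i : Fin m, ∀ᶠ y in nhds (x i.castSucc),
      N i y - y - Δt • G i (N i y) = 0)
    (he : ∀ i : Fin m,
      (e i : EuclideanSpace ℝ (Fin n) →L[ℝ] EuclideanSpace ℝ (Fin n)) =
        ContinuousLinearMap.id ℝ (EuclideanSpace ℝ (Fin n)) -
          Δt • fderiv ℝ (G i) (x i.succ)) :
    (List.ofFn (fun i =>
        ContinuousLinearMap.id ℝ (EuclideanSpace ℝ (Fin n)) -
          Δt • fderiv ℝ (G i) (x i.succ))).prod.comp
        (fderiv ℝ (fun y => (List.ofFn N).foldl (fun z f => f z) y) (x 0)) =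
      ContinuousLinearMap.id ℝ (EuclideanSpace ℝ (Fin n)) ∧
    (fderiv ℝ (fun y => (List.ofFn N).foldl (fun z f => f z) y) (x 0)).comp
        (List.ofFn (fun i =>
          ContinuousLinearMap.id ℝ (EuclideanSpace ℝ (Fin n)) -
            Δt • fderiv ℝ (G i) (x i.succ))).prod =
      ContinuousLinearMap.id ℝ (EuclideanSpace ℝ (Fin n)) :=
  implicit_euler_fderiv_inverse_general n m Δt G N x e hstep hG hN hres he
end

section
/- (Theorem, vector form) Let n, m be positive natural numbers, Δt ∈ ℝ, and for each i = 1, ..., m let G_i : ℝ^n → ℝ^n (the right-hand side G(i·Δt, ·) at time step i) and N_i : ℝ^n → ℝ^n (the i-th implicit Euler step). Let x₀, x₁, ..., x_m ∈ ℝ^n satisfy N_i(x_{i-1}) = x_i, suppose G_i is differentiable at x_i and N_i is differentiable at x_{i-1}, that for all y in some neighborhood of x_{i-1} the residual identity N_i(y) - y - Δt · G_i(N_i(y)) = 0 holds, and that the continuous linear map A_i = id - Δt • (fderiv G_i x_i) is invertible with inverse given by a continuous linear equivalence e_i. Then for every v ∈ ℝ^n, the vector w = A_1(A_2(...(A_m(v))...))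 obtained by m successive matrix-vector products with the residual Jacobians A_m, A_{m-1}, ..., A_1 satisfies (fderiv (N_m ∘ ... ∘ N_1) x₀)(w) = v; that is, w is the differential inverse (E')⁻¹ · v of the implicit Euler method applied to v. -/
/-!
Differentiating the residual identity `N y = y + Δt • G (N y)` at `x_{i-1}` gives
`A_i ∘ N_i' = id`, so `N_i' = A_i⁻¹`. By the chain rule the derivative of the composite
is `N_m' ∘ ⋯ ∘ N_1'`, which undoes `A_1 ∘ ⋯ ∘ A_m` factor by factor.
-/

open Filter Topology

section

variable {𝕜 E : Type*} [NontriviallyNormedField 𝕜] [NormedAddCommGroup E] [NormedSpace 𝕜 E]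

theorem hasFDerivAt_symm_of_eventually_implicit_step {N G : E → E} {a b : E} {c : 𝕜}
    {e : E ≃L[𝕜] E} (hb : N a = b) (hG : DifferentiableAt 𝕜 G b) (hN : DifferentiableAt 𝕜 N a)
    (hres : ∀ᶠ y in 𝓝 a, N y - y - c • G (N y) = 0)
    (he : (e : E →L[𝕜] E) = ContinuousLinearMap.id 𝕜 E - c • fderiv 𝕜 G b) :
    HasFDerivAt N (e.symm : E →L[𝕜] E) a := by
  set D := fderiv 𝕜 N a
  have hD : HasFDerivAt N D a := hN.hasFDerivAt
  have hGN : HasFDerivAt (fun y => G (N y)) ((fderiv 𝕜 G b).comp D) a := by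
    subst hb
    exact hG.hasFDerivAt.comp a hD
  have hN_eq : (fun y => y + c • G (N y)) =ᶠ[𝓝 a] N := by
    filter_upwards [hres] with y hy
    rw [sub_sub, sub_eq_zero] at hy
    exact hy.symm
  have hfix : D = ContinuousLinearMap.id 𝕜 E + c • (fderiv 𝕜 G b).comp D :=
    hD.unique (((hasFDerivAt_id a).add (hGN.const_smul c)).congr_of_eventuallyEq hN_eq.symm)
  have hleft : (e : E →L[𝕜] E).comp D = ContinuousLinearMap.id 𝕜 E := by
    rw [he, ContinuousLinearMap.sub_comp, ContinuousLinearMap.id_comp,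
      ContinuousLinearMap.smul_comp]
    exact sub_eq_of_eq_add hfix
  have hD_symm : D = (e.symm : E →L[𝕜] E) := by
    simpa using (ContinuousLinearEquiv.eq_toContinuousLinearMap_symm_comp D
      (ContinuousLinearMap.id 𝕜 E)).2 hleft
  exact hD_symm ▸ hD

theorem hasFDerivAt_foldl_ofFn {m : ℕ} {f : Fin m → E → E} {L : Fin m → E →L[𝕜] E}
    {x : Fin (m + 1) → E} (hstep : ∀ i, f i (x i.castSucc) = x i.succ)
    (hf : ∀ i, HasFDerivAt (f i) (L i) (x i.castSucc)) :
    HasFDerivAt (fun y => (List.ofFn f).foldl (fun z g => g z) y)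
      ((List.ofFn L).foldr (fun K M => M.comp K) (ContinuousLinearMap.id 𝕜 E)) (x 0) := by
  induction m with
  | zero => exact hasFDerivAt_id (x 0)
  | succ m ih =>
    have htail := ih (x := fun i => x i.succ)
      (fun i => by rw [Fin.succ_castSucc]; exact hstep i.succ)
      (fun i => by rw [Fin.succ_castSucc]; exact hf i.succ)
    simp only [List.ofFn_succ, List.foldl_cons, List.foldr_cons]
    exact (hstep 0 ▸ htail).comp (x 0) (hf 0)

theorem foldr_comp_apply_foldr_of_rightInverse {m : ℕ} {L A : Fin m → E →L[𝕜] E}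
    (hLA : ∀ i w, L i (A i w) = w) (v : E) :
    ((List.ofFn L).foldr (fun K M => M.comp K) (ContinuousLinearMap.id 𝕜 E))
      ((List.finRange m).foldr (fun i w => A i w) v) = v := by
  induction m with
  | zero => simp
  | succ m ih =>
    simp only [List.ofFn_succ, List.finRange_succ, List.foldr_cons, List.foldr_map,
      ContinuousLinearMap.comp_apply, hLA]
    exact ih (fun i w => hLA i.succ w)

end

theorem implicit_euler_differential_inverse_vec_general (n m : ℕ)
    (Δt : ℝ)
    (G N : Fin m → (EuclideanSpace ℝ (Fin n) → EuclideanSpace ℝ (Fin n)))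
    (x : Fin (m + 1) → EuclideanSpace ℝ (Fin n))
    (e : Fin m → (EuclideanSpace ℝ (Fin n) ≃L[ℝ] EuclideanSpace ℝ (Fin n)))
    (hstep : ∀ i : Fin m, N i (x i.castSucc) = x i.succ)
    (hG : ∀ i : Fin m, DifferentiableAt ℝ (G i) (x i.succ))
    (hN : ∀ i : Fin m, DifferentiableAt ℝ (N i) (x i.castSucc))
    (hres : ∀ i : Fin m, ∀ᶠ y in nhds (x i.castSucc),
      N i y - y - Δt • G i (N i y) = 0)
    (he : ∀ i : Fin m,
      (e i : EuclideanSpace ℝ (Fin n) →L[ℝ] EuclideanSpace ℝ (Fin n)) =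
        ContinuousLinearMap.id ℝ (EuclideanSpace ℝ (Fin n)) -
          Δt • fderiv ℝ (G i) (x i.succ)) :
    ∀ v : EuclideanSpace ℝ (Fin n),
      fderiv ℝ (fun y => (List.ofFn N).foldl (fun z f => f z) y) (x 0)
        ((List.finRange m).foldr
          (fun i w =>
            (ContinuousLinearMap.id ℝ (EuclideanSpace ℝ (Fin n)) -
              Δt • fderiv ℝ (G i) (x i.succ)) w)
          v) = v := by
  intro v
  have hNderiv i := hasFDerivAt_symm_of_eventually_implicit_step (hstep i) (hG i) (hN i)
    (hres i) (he i)
  rw [(hasFDerivAt_foldl_ofFn hstep hNderiv).fderiv]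
  refine foldr_comp_apply_foldr_of_rightInverse (fun i w => ?_) v
  rw [← he i]
  exact (e i).symm_apply_apply w

/-- Theorem (vector form): under the hypotheses of Lemma 2, for every vector
`v`, the vector `w = A_1 (A_2 (⋯ (A_m v)⋯))` obtained by `m` successive
matrix-vector products with the residual Jacobians
`A_i = id - Δt • (fderiv G_i x_i)` (0-indexed: the right fold over
`List.finRange m`, applying `A (m-1)` to `v` first and `A 0` last) satisfies
`(fderiv (N_m ∘ ⋯ ∘ N_1) x₀) w = v`; that is, `w` is the differential inverse
`(E')⁻¹ · v` of the implicit Euler method applied to `v`. -/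
theorem implicit_euler_differential_inverse_vec (n m : ℕ) (hn : 0 < n) (hm : 0 < m)
    (Δt : ℝ)
    (G N : Fin m → (EuclideanSpace ℝ (Fin n) → EuclideanSpace ℝ (Fin n)))
    (x : Fin (m + 1) → EuclideanSpace ℝ (Fin n))
    (e : Fin m → (EuclideanSpace ℝ (Fin n) ≃L[ℝ] EuclideanSpace ℝ (Fin n)))
    (hstep : ∀ i : Fin m, N i (x i.castSucc) = x i.succ)
    (hG : ∀ i : Fin m, DifferentiableAt ℝ (G i) (x i.succ))
    (hN : ∀ i : Fin m, DifferentiableAt ℝ (N i) (x i.castSucc))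
    (hres : ∀ i : Fin m, ∀ᶠ y in nhds (x i.castSucc),
      N i y - y - Δt • G i (N i y) = 0)
    (he : ∀ i : Fin m,
      (e i : EuclideanSpace ℝ (Fin n) →L[ℝ] EuclideanSpace ℝ (Fin n)) =
        ContinuousLinearMap.id ℝ (EuclideanSpace ℝ (Fin n)) -
          Δt • fderiv ℝ (G i) (x i.succ)) :
    ∀ v : EuclideanSpace ℝ (Fin n),
      fderiv ℝ (fun y => (List.ofFn N).foldl (fun z f => f z) y) (x 0)
        ((List.finRange m).foldr
          (fun i w =>
            (ContinuousLinearMap.id ℝ (EuclideanSpace ℝ (Fin n)) -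
              Δt • fderiv ℝ (G i) (x i.succ)) w)
          v) = v :=
  implicit_euler_differential_inverse_vec_general n m Δt G N x e hstep hG hN hres he
end
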